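/- For any invertible (n+p)×(n+p) matrix A whose top-left n×n block of A is considered: det(A^{-1}) · det((A)_{ij}, 1 ≤ i,j ≤ n) = det((A^{-1})_{kl}, n+1 ≤ k,l ≤ n+p). -/

import Mathlib

/-!
Write `M = A` and `N = A⁻¹` in block form for the splitting `n + p`. Since `M * N = 1`, multiplying
`M` by the block upper-triangular matrix `[[1, N₁₂], [0, N₂₂]]` gives the block lower-triangular
matrix `[[M₁₁, 0], [M₂₁, 1]]`; taking determinants, `det M * det N₂₂ = det M₁₁`.
-/

namespace Matrix

variable {m n R : Type*} [Fintype m] [Fintype n] [DecidableEq m] [DecidableEq n] [CommRing R]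

theorem mul_fromBlocks_toBlocks_right_eq_of_mul_eq_one {M N : Matrix (m ⊕ n) (m ⊕ n) R}
    (hMN : M * N = 1) :
    M * fromBlocks 1 N.toBlocks₁₂ 0 N.toBlocks₂₂ = fromBlocks M.toBlocks₁₁ 0 M.toBlocks₂₁ 1 := by
  rw [← fromBlocks_toBlocks N, ← fromBlocks_toBlocks M, fromBlocks_multiply, ← fromBlocks_one,
    fromBlocks_inj] at hMN
  obtain ⟨-, h₁₂, -, h₂₂⟩ := hMN
  conv_lhs => rw [← fromBlocks_toBlocks M]
  rw [fromBlocks_multiply, h₁₂, h₂₂]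
  simp

theorem det_mul_det_toBlocks₂₂_of_mul_eq_one {M N : Matrix (m ⊕ n) (m ⊕ n) R}
    (hMN : M * N = 1) : M.det * N.toBlocks₂₂.det = M.toBlocks₁₁.det := by
  simpa [det_fromBlocks_zero₂₁, det_fromBlocks_zero₁₂] using
    congrArg det (mul_fromBlocks_toBlocks_right_eq_of_mul_eq_one hMN)

end Matrix

open Matrix

/-- Jacobi's identity: for an invertible `(n+p)×(n+p)` matrix `A`,
`det(A⁻¹) · det(top-left n×n block of A) = det(bottom-right p×p block of A⁻¹)`. -/
theorem stmt_7 {K : Type*} [Field K] (n p : ℕ)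
    (A : Matrix (Fin (n + p)) (Fin (n + p)) K) (hA : IsUnit A.det) :
    A⁻¹.det * (A.submatrix (Fin.castAdd p) (Fin.castAdd p)).det
      = (A⁻¹.submatrix (Fin.natAdd n) (Fin.natAdd n)).det := by
  let e : Fin n ⊕ Fin p ≃ Fin (n + p) := finSumFinEquiv
  have hMN : A.submatrix e e * A⁻¹.submatrix e e = 1 := by
    rw [submatrix_mul_equiv, mul_nonsing_inv A hA, submatrix_one_equiv]
  have hJacobi := det_mul_det_toBlocks₂₂_of_mul_eq_one hMN
  rw [det_submatrix_equiv_self] at hJacobi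
  have h₁₁ : (A.submatrix e e).toBlocks₁₁ = A.submatrix (Fin.castAdd p) (Fin.castAdd p) := rfl
  have h₂₂ : (A⁻¹.submatrix e e).toBlocks₂₂ = A⁻¹.submatrix (Fin.natAdd n) (Fin.natAdd n) := rfl
  rw [← h₁₁, ← h₂₂, ← hJacobi, ← mul_assoc, ← det_mul, nonsing_inv_mul A hA, det_one, one_mul]
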